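/- arXiv:2105.05374 — 2 statements merged into one kernel-verified Lean document; each statement's English description precedes it below -/
import Mathlib

section
/- Suppose n ≥ 2, X is a Hausdorff space, E is an analytic equivalence relation on X, G is an E-invariant analytic n-dimensional dihypergraph on X, and A ⊆ X is a G-independent analytic set. Then there is an E-invariant G-independent Borel set B ⊆ X containing A. -/
/-!
An analytic `G`-independent set `S` has a Borel `G`-independent superset: replace the coordinates
one at a time, using Lusin separation to cover `S` by a Borel set avoiding the analytic set of
values that the free coordinate takes on edges of `G` whose other coordinates lie in the sets
already chosen. Alternating such Borel covers with `E`-saturations, which keep analyticity because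
`E` is analytic and keep independence because `G` is `E`-invariant, gives an increasing sequence
of Borel independent sets. Its union is `E`-invariant, and independent since an edge has only
finitely many coordinates.
-/

open MeasureTheory Set Function

namespace MeasureTheory

variable {X : Type*} [TopologicalSpace X]

theorem AnalyticSet.univ_pi {ι : Type} [Countable ι] {t : ι → Set X}
    (ht : ∀ i, AnalyticSet (t i)) : AnalyticSet (univ.pi t) := by
  choose γ _ _ f hf hrange using fun i => analyticSet_iff_exists_polishSpace_range.1 (ht i)
  refine analyticSet_iff_exists_polishSpace_range.2
    ⟨∀ i, γ i, inferInstance, inferInstance, Pi.map f, continuous_pi fun i => (hf i).comp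
      (continuous_apply i), ?_⟩
  rw [range_piMap, funext hrange]

theorem AnalyticSet.prod {Y : Type*} [TopologicalSpace Y] {s : Set X} {t : Set Y}
    (hs : AnalyticSet s) (ht : AnalyticSet t) : AnalyticSet (s ×ˢ t) := by
  obtain ⟨γ, _, _, f, hf, rfl⟩ := analyticSet_iff_exists_polishSpace_range.1 hs
  obtain ⟨δ, _, _, g, hg, rfl⟩ := analyticSet_iff_exists_polishSpace_range.1 ht
  rw [← range_prodMap]
  exact analyticSet_range_of_polishSpace (hf.prodMap hg)

theorem AnalyticSet.inter [T2Space X] {s t : Set X} (hs : AnalyticSet s) (ht : AnalyticSet t) :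
    AnalyticSet (s ∩ t) := by
  rw [inter_eq_iInter]
  exact AnalyticSet.iInter fun b => by cases b <;> assumption

theorem AnalyticSet.inter_measurableSet [MeasurableSpace X] [BorelSpace X] {s t : Set X}
    (hs : AnalyticSet s) (ht : MeasurableSet t) : AnalyticSet (s ∩ t) := by
  rw [AnalyticSet] at hs
  rcases hs with rfl | ⟨f, hf, rfl⟩
  · simpa using analyticSet_empty
  · rw [← image_preimage_eq_range_inter]
    exact (hf.measurable ht).analyticSet.image_of_continuous hf

theorem _root_.MeasurableSet.analyticSet_of_analyticSet_univ [MeasurableSpace X] [BorelSpace X]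
    {t : Set X} (ht : MeasurableSet t) (hX : AnalyticSet (univ : Set X)) : AnalyticSet t := by
  simpa using hX.inter_measurableSet ht

end MeasureTheory

section IndepSet

variable {X : Type*} {ι : Type*}

def IsIndepSet (G : Set (ι → X)) (S : Set X) : Prop :=
  ∀ x ∈ G, ¬ ∀ i, x i ∈ S

theorem isIndepSet_iff_disjoint {G : Set (ι → X)} {S : Set X} :
    IsIndepSet G S ↔ Disjoint G (univ.pi fun _ => S) := by
  simp [IsIndepSet, disjoint_left]

theorem IsIndepSet.iUnion_of_monotone [Finite ι] {κ : Type*} [Preorder κ] [IsDirectedOrder κ]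
    [Nonempty κ] {G : Set (ι → X)} {T : κ → Set X} (hT : Monotone T)
    (hG : ∀ m, IsIndepSet G (T m)) : IsIndepSet G (⋃ m, T m) := by
  intro x hx hxT
  choose m hm using fun i => mem_iUnion.1 (hxT i)
  obtain ⟨M, hM⟩ := Finite.exists_le m
  exact hG M x hx fun i => hT (hM i) (hm i)

end IndepSet

section BorelCover

variable {X : Type*} [TopologicalSpace X] [T2Space X] {ι : Type}

theorem exists_measurableSet_superset_disjoint_pi_update [MeasurableSpace X] [BorelSpace X]
    [Countable ι] [DecidableEq ι] {G : Set (ι → X)} (hG : AnalyticSet G)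
    (hX : AnalyticSet (univ : Set X)) {R : ι → Set X} (hR : ∀ i, AnalyticSet (R i))
    (hGR : Disjoint G (univ.pi R)) (j : ι) :
    ∃ u, MeasurableSet u ∧ R j ⊆ u ∧ Disjoint G (univ.pi (update R j u)) := by
  have mem_pi_update {x : ι → X} {u : Set X} :
      x ∈ univ.pi (update R j u) ↔ x j ∈ u ∧ ∀ i ≠ j, x i ∈ R i := by
    simp only [mem_univ_pi]
    exact forall_update_iff R (p := fun i s => x i ∈ s)
  set D := eval j '' (G ∩ univ.pi (update R j univ))
  have hD : AnalyticSet D := by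
    refine (hG.inter (AnalyticSet.univ_pi fun i => ?_)).image_of_continuous (continuous_apply j)
    rcases eq_or_ne i j with rfl | hij
    · simpa using hX
    · simpa [hij] using hR i
  have hRD : Disjoint (R j) D := by
    rw [disjoint_left]
    rintro y hy ⟨x, ⟨hxG, hx⟩, rfl⟩
    refine disjoint_left.1 hGR hxG ?_
    simpa using mem_pi_update.2 ⟨hy, (mem_pi_update.1 hx).2⟩
  obtain ⟨u, hRu, hDu, hu⟩ := (hR j).measurablySeparable hD hRD
  refine ⟨u, hu, hRu, disjoint_left.2 fun x hxG hx => ?_⟩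
  obtain ⟨hxu, hxR⟩ := mem_pi_update.1 hx
  exact disjoint_left.1 hDu ⟨x, ⟨hxG, mem_pi_update.2 ⟨trivial, hxR⟩⟩, rfl⟩ hxu

theorem exists_measurableSet_superset_isIndepSet [MeasurableSpace X] [BorelSpace X] [Finite ι]
    {G : Set (ι → X)} (hG : AnalyticSet G) (hX : AnalyticSet (univ : Set X)) {S : Set X}
    (hS : AnalyticSet S) (hSG : IsIndepSet G S) :
    ∃ B, MeasurableSet B ∧ S ⊆ B ∧ IsIndepSet G B := by
  classical
  have := Fintype.ofFinite ι
  have hcoords (s : Finset ι) : ∃ R : ι → Set X, (∀ i, AnalyticSet (R i)) ∧ (∀ i, S ⊆ R i) ∧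
      (∀ i ∈ s, MeasurableSet (R i)) ∧ Disjoint G (univ.pi R) := by
    induction s using Finset.induction_on with
    | empty => exact ⟨fun _ => S, fun _ => hS, fun _ => subset_rfl, by simp,
        isIndepSet_iff_disjoint.1 hSG⟩
    | insert j s _ ih =>
      obtain ⟨R, hR, hSR, hRs, hGR⟩ := ih
      obtain ⟨u, hu, hRu, hGu⟩ := exists_measurableSet_superset_disjoint_pi_update hG hX hR hGR j
      refine ⟨update R j u, ?_, ?_, ?_, hGu⟩
      · exact forall_update_iff R (p := fun _ s => AnalyticSet s) |>.2
          ⟨hu.analyticSet_of_analyticSet_univ hX, fun i _ => hR i⟩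
      · exact forall_update_iff R (p := fun _ s => S ⊆ s) |>.2
          ⟨(hSR j).trans hRu, fun i _ => hSR i⟩
      · intro i hi
        rcases eq_or_ne i j with rfl | hij
        · simpa using hu
        · simpa [hij] using hRs i ((Finset.mem_insert.1 hi).resolve_left hij)
  obtain ⟨R, -, hSR, hR, hGR⟩ := hcoords Finset.univ
  refine ⟨⋂ i, R i, .iInter fun i => hR i (Finset.mem_univ i), subset_iInter hSR, ?_⟩
  exact fun x hx hxR => disjoint_left.1 hGR hx fun i _ => mem_iInter.1 (hxR i) i

end BorelCover

section Saturation

variable {X : Type*} (E : X → X → Prop)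

def saturation (S : Set X) : Set X := {x | ∃ y ∈ S, E x y}

def IsSaturated (B : Set X) : Prop := ∀ a b, E a b → (a ∈ B ↔ b ∈ B)

variable {E}

theorem subset_saturation (hE : ∀ x, E x x) (S : Set X) : S ⊆ saturation E S :=
  fun x hx => ⟨x, hx, hE x⟩

theorem IsIndepSet.saturation {ι : Type*} {G : Set (ι → X)}
    (hGE : ∀ x y : ι → X, (∀ i, E (x i) (y i)) → x ∈ G → y ∈ G) {S : Set X}
    (hS : IsIndepSet G S) : IsIndepSet G (saturation E S) := by
  intro x hx hxS
  choose y hyS hxy using hxS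
  exact hS y (hGE x y hxy hx) hyS

theorem isSaturated_iUnion_of_saturation_subset (hE : ∀ {a b}, E a b → E b a) {T : ℕ → Set X}
    (hT : ∀ m, saturation E (T m) ⊆ T (m + 1)) : IsSaturated E (⋃ m, T m) := by
  suffices ∀ a b, E a b → a ∈ ⋃ m, T m → b ∈ ⋃ m, T m from
    fun a b hab => ⟨this a b hab, this b a (hE hab)⟩
  intro a b hab ha
  obtain ⟨m, hm⟩ := mem_iUnion.1 ha
  exact mem_iUnion.2 ⟨m + 1, hT m ⟨a, hm, hE hab⟩⟩

variable [TopologicalSpace X]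

theorem analyticSet_univ_of_reflexive (hEX : AnalyticSet {p : X × X | E p.1 p.2})
    (hE : ∀ x, E x x) : AnalyticSet (univ : Set X) := by
  have hfst : Prod.fst '' {p : X × X | E p.1 p.2} = univ :=
    eq_univ_of_forall fun x => ⟨(x, x), hE x, rfl⟩
  simpa [hfst] using hEX.image_of_continuous continuous_fst

theorem MeasureTheory.AnalyticSet.saturation [T2Space X] {S : Set X} (hS : AnalyticSet S)
    (hEX : AnalyticSet {p : X × X | E p.1 p.2}) (hX : AnalyticSet (univ : Set X)) :
    AnalyticSet (saturation E S) := by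
  convert (hEX.inter (hX.prod hS)).image_of_continuous continuous_fst
  ext x
  constructor
  · rintro ⟨y, hy, hxy⟩
    exact ⟨(x, y), ⟨hxy, trivial, hy⟩, rfl⟩
  · rintro ⟨⟨x, y⟩, ⟨hxy, -, hy⟩, rfl⟩
    exact ⟨y, hy, hxy⟩

end Saturation

theorem exists_isSaturated_measurableSet_superset_isIndepSet {X : Type*} [TopologicalSpace X]
    [T2Space X] [MeasurableSpace X] [BorelSpace X] {ι : Type} [Finite ι] {E : X → X → Prop}
    (hE : Equivalence E) (hEX : AnalyticSet {p : X × X | E p.1 p.2}) {G : Set (ι → X)}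
    (hG : AnalyticSet G) (hGE : ∀ x y : ι → X, (∀ i, E (x i) (y i)) → x ∈ G → y ∈ G)
    {A : Set X} (hA : AnalyticSet A) (hAG : IsIndepSet G A) :
    ∃ B, MeasurableSet B ∧ A ⊆ B ∧ IsSaturated E B ∧ IsIndepSet G B := by
  have hX := analyticSet_univ_of_reflexive hEX hE.refl
  choose! cover hcover using fun S (hS : AnalyticSet S ∧ IsIndepSet G S) =>
    exists_measurableSet_superset_isIndepSet hG hX hS.1 hS.2
  have hsat {S : Set X} (hS : MeasurableSet S ∧ IsIndepSet G S) :
      AnalyticSet (saturation E S) ∧ IsIndepSet G (saturation E S) :=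
    ⟨(hS.1.analyticSet_of_analyticSet_univ hX).saturation hEX hX, hS.2.saturation hGE⟩
  let T : ℕ → Set X := fun m => Nat.rec (cover A) (fun _ Tm => cover (saturation E Tm)) m
  have hT (m : ℕ) : MeasurableSet (T m) ∧ IsIndepSet G (T m) := by
    induction m with
    | zero => exact ⟨(hcover A ⟨hA, hAG⟩).1, (hcover A ⟨hA, hAG⟩).2.2⟩
    | succ m ih => exact ⟨(hcover _ (hsat ih)).1, (hcover _ (hsat ih)).2.2⟩
  have hsucc (m : ℕ) : saturation E (T m) ⊆ T (m + 1) := (hcover _ (hsat (hT m))).2.1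
  have hmono : Monotone T :=
    monotone_nat_of_le_succ fun m => (subset_saturation hE.refl _).trans (hsucc m)
  exact ⟨⋃ m, T m, .iUnion fun m => (hT m).1, (hcover A ⟨hA, hAG⟩).2.1.trans (subset_iUnion T 0),
    isSaturated_iUnion_of_saturation_subset hE.symm hsucc,
    IsIndepSet.iUnion_of_monotone hmono fun m => (hT m).2⟩

theorem invariant_analytic_separation_dihypergraph_general
    (n : ℕ) (X : Type) [TopologicalSpace X] [T2Space X]
    (E : X → X → Prop) (hE : Equivalence E)
    (hEanalytic : AnalyticSet {p : X × X | E p.1 p.2})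
    (G : Set (Fin n → X)) (hG : AnalyticSet G)
    (hGinv : ∀ x y : Fin n → X, (∀ i, E (x i) (y i)) → (x ∈ G ↔ y ∈ G))
    (A : Set X) (hA : AnalyticSet A)
    (hAind : ∀ x ∈ G, ¬ ∀ i, x i ∈ A) :
    ∃ B : Set X, MeasurableSet[borel X] B ∧ A ⊆ B ∧
      (∀ a b : X, E a b → (a ∈ B ↔ b ∈ B)) ∧
      ∀ x ∈ G, ¬ ∀ i, x i ∈ B := by
  let : MeasurableSpace X := borel X
  have : BorelSpace X := ⟨rfl⟩
  exact exists_isSaturated_measurableSet_superset_isIndepSet hE hEanalytic hG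
    (fun x y hxy => (hGinv x y hxy).1) hA hAind

theorem invariant_analytic_separation_dihypergraph
    (n : ℕ) (hn : 2 ≤ n) (X : Type) [TopologicalSpace X] [T2Space X]
    (E : X → X → Prop) (hE : Equivalence E)
    (hEanalytic : AnalyticSet {p : X × X | E p.1 p.2})
    (G : Set (Fin n → X)) (hG : AnalyticSet G)
    (hGnc : ∀ x ∈ G, ¬ ∀ i j : Fin n, x i = x j)
    (hGinv : ∀ x y : Fin n → X, (∀ i, E (x i) (y i)) → (x ∈ G ↔ y ∈ G))
    (A : Set X) (hA : AnalyticSet A)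
    (hAind : ∀ x ∈ G, ¬ ∀ i, x i ∈ A) :
    ∃ B : Set X, MeasurableSet[borel X] B ∧ A ⊆ B ∧
      (∀ a b : X, E a b → (a ∈ B ↔ b ∈ B)) ∧
      ∀ x ∈ G, ¬ ∀ i, x i ∈ B :=
  invariant_analytic_separation_dihypergraph_general n X E hE hEanalytic G hG hGinv A hA hAind
end

section
/- If j, k ≥ 2 are relatively prime, then there is no Baire-measurable function φ : 2^ℕ → 2^ℕ mapping (E₀ \ F₀(j))-related pairs to (E₀ \ F₀(k))-related pairs and F₀(j)-related pairs to F₀(k)-related pairs. -/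
/-- Eventual equality on Cantor space. -/
def E0 (c d : ℕ → Bool) : Prop := ∃ n : ℕ, ∀ m ≥ n, c m = d m

open Finset in
/-- The index-`k` subrelation `F₀(k)` of `E₀`: eventual agreement of partial
sums modulo `k`. -/
def F0 (k : ℕ) (c d : ℕ → Bool) : Prop :=
  ∃ n : ℕ, ∀ m ≥ n,
    (∑ i ∈ range m, (c i).toNat) % k = (∑ i ∈ range m, (d i).toNat) % k

/-- A Baire-measurable function: preimages of open sets have the Baire
property. -/
def BaireMeasurableFun {α β : Type} [TopologicalSpace α] [TopologicalSpace β]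
    (f : α → β) : Prop :=
  ∀ U : Set β, IsOpen U → BaireMeasurableSet (f ⁻¹' U)

/-!
If `φ` were such a homomorphism, flipping one bit of `x` would move `φ x` within its `E₀`-class
by a shift of partial sums modulo `k`, an element of `ZMod k` that is nonzero since a single flip
is not an `F₀(j)`-move, and that depends Baire-measurably on `x`. At a generic `x` the shift for
flipping bit `n` is unchanged when bits beyond some `M n` are flipped first, so along `j + 1`
zeros of `x`, each beyond `M` of the previous ones, shifts add up. Flipping any `j` of these
zeros is an `F₀(j)`-move, so any `j` of the `j + 1` shifts sum to `0`: all of them are equal,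
to some `s` with `j • s = 0`, and `s = 0` because `j` is a unit modulo `k`.
-/

open Filter Set Topology Finset

instance ZMod.countable (k : ℕ) : Countable (ZMod k) :=
  ZMod.intCast_surjective.countable

lemma BaireMeasurableFun.comp_homeomorph {α β γ : Type} [TopologicalSpace α] [TopologicalSpace β]
    [TopologicalSpace γ] {φ : α → β} (hφ : BaireMeasurableFun φ) (e : γ ≃ₜ α) :
    BaireMeasurableFun (φ ∘ e) :=
  fun U hU => (hφ U hU).preimage e.continuous e.isOpenMap

section ModShift

def partialSum (c : ℕ → Bool) (m : ℕ) : ℕ := ∑ i ∈ range m, (c i).toNat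

lemma continuous_partialSum (m : ℕ) : Continuous fun c : ℕ → Bool => partialSum c m :=
  continuous_finsetSum _ fun i _ => (continuous_of_discreteTopology (f := Bool.toNat)).comp
    (continuous_apply i)

/-- The `F₀(k)`-classes inside an `E₀`-class are indexed by `ZMod k`; `a` is the index of the
class of `d` relative to that of `c`. -/
def ModShift (k : ℕ) (c d : ℕ → Bool) (a : ZMod k) : Prop :=
  ∀ᶠ m in atTop, (partialSum d m : ZMod k) = partialSum c m + a

variable {k : ℕ} {c d e : ℕ → Bool} {a b : ZMod k}

lemma ModShift.refl (k : ℕ) (c : ℕ → Bool) : ModShift k c c 0 :=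
  Eventually.of_forall fun _ => (add_zero _).symm

lemma ModShift.unique (h₁ : ModShift k c d a) (h₂ : ModShift k c d b) : a = b := by
  obtain ⟨m, hm₁, hm₂⟩ := (h₁.and h₂).exists
  exact add_left_cancel (hm₁.symm.trans hm₂)

lemma ModShift.symm (h : ModShift k c d a) : ModShift k d c (-a) :=
  h.mono fun m hm => by rw [hm]; ring

lemma ModShift.trans (h₁ : ModShift k c d a) (h₂ : ModShift k d e b) : ModShift k c e (a + b) :=
  (h₁.and h₂).mono fun m ⟨hm₁, hm₂⟩ => by rw [hm₂, hm₁, add_assoc]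

lemma F0_iff_modShift_zero : F0 k c d ↔ ModShift k c d 0 := by
  simp only [ModShift, add_zero, eventually_atTop, ZMod.natCast_eq_natCast_iff,
    eq_comm (a := (partialSum d _ : ZMod k))]
  rfl

lemma E0.exists_modShift (h : E0 c d) : ∃ a : ZMod k, ModShift k c d a := by
  obtain ⟨n, hn⟩ := h
  refine ⟨partialSum d n - partialSum c n, eventually_atTop.2 ⟨n, fun m hm => ?_⟩⟩
  have htail : ∑ i ∈ Ico n m, (d i).toNat = ∑ i ∈ Ico n m, (c i).toNat :=
    sum_congr rfl fun i hi => by rw [hn i (mem_Ico.1 hi).1]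
  simp only [partialSum, ← sum_range_add_sum_Ico _ hm, htail]
  push_cast
  ring

lemma isOpen_setOf_partialSum_eq (m : ℕ) (q : ZMod k) :
    IsOpen {c : ℕ → Bool | (partialSum c m : ZMod k) = q} :=
  (continuous_partialSum m).isOpen_preimage {n : ℕ | (n : ZMod k) = q} (isOpen_discrete _)

lemma BaireMeasurableFun.baireMeasurableSet_modShift {α : Type} [TopologicalSpace α]
    {φ ψ : α → ℕ → Bool} (hφ : BaireMeasurableFun φ) (hψ : BaireMeasurableFun ψ) (a : ZMod k) :
    BaireMeasurableSet {x | ModShift k (φ x) (ψ x) a} := by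
  have hset : {x | ModShift k (φ x) (ψ x) a} = ⋃ N : ℕ, ⋂ m ≥ N, ⋃ q : ZMod k,
      φ ⁻¹' {c | (partialSum c m : ZMod k) = q} ∩
        ψ ⁻¹' {c | (partialSum c m : ZMod k) = q + a} := by
    ext x
    simp [ModShift, eventually_atTop]
  rw [hset]
  exact .iUnion fun N => .iInter fun m => .iInter fun _ => .iUnion fun q =>
    (hφ _ (isOpen_setOf_partialSum_eq m q)).inter (hψ _ (isOpen_setOf_partialSum_eq m (q + a)))

end ModShift

section Flip

def flipOn (F : Finset ℕ) : (ℕ → Bool) ≃ₜ (ℕ → Bool) where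
  toFun x i := if i ∈ F then !x i else x i
  invFun x i := if i ∈ F then !x i else x i
  left_inv x := by ext i; by_cases h : i ∈ F <;> simp [h]
  right_inv x := by ext i; by_cases h : i ∈ F <;> simp [h]
  continuous_toFun := continuous_pi fun i => by
    split_ifs
    exacts [(continuous_of_discreteTopology (f := not)).comp (continuous_apply i),
      continuous_apply i]
  continuous_invFun := continuous_pi fun i => by
    split_ifs
    exacts [(continuous_of_discreteTopology (f := not)).comp (continuous_apply i),
      continuous_apply i]

variable {F : Finset ℕ} {x : ℕ → Bool}

lemma flipOn_apply (F : Finset ℕ) (x : ℕ → Bool) (i : ℕ) :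
    flipOn F x i = if i ∈ F then !x i else x i := rfl

@[simp] lemma flipOn_empty (x : ℕ → Bool) : flipOn ∅ x = x := by
  ext i; simp [flipOn_apply]

lemma flipOn_insert {n : ℕ} (hn : n ∉ F) (x : ℕ → Bool) :
    flipOn (insert n F) x = flipOn {n} (flipOn F x) := by
  ext i
  by_cases hi : i = n
  · subst hi; simp [flipOn_apply, hn]
  · simp [flipOn_apply, hi]

lemma flipOn_apply_of_lt {M i : ℕ} (hF : ∀ n ∈ F, M ≤ n) (hi : i < M) : flipOn F x i = x i :=
  if_neg fun h => (hF i h).not_gt hi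

lemma E0_flipOn (F : Finset ℕ) (x : ℕ → Bool) : E0 x (flipOn F x) := by
  obtain ⟨N, hN⟩ := F.exists_nat_subset_range
  exact ⟨N, fun m hm => (if_neg fun h => (mem_range.1 (hN h)).not_ge hm).symm⟩

lemma modShift_flipOn (k : ℕ) (hF : ∀ i ∈ F, x i = false) : ModShift k x (flipOn F x) #F := by
  obtain ⟨N, hN⟩ := F.exists_nat_subset_range
  refine eventually_atTop.2 ⟨N, fun m hm => ?_⟩
  have hsub : F ⊆ range m := hN.trans (range_subset_range.2 hm)
  have hterm : ∀ i ∈ range m,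
      (flipOn F x i).toNat = (x i).toNat + if i ∈ F then 1 else 0 := by
    intro i _
    by_cases h : i ∈ F <;> simp [flipOn_apply, h, hF]
  rw [partialSum, sum_congr rfl hterm, sum_add_distrib, sum_ite_mem,
    Finset.inter_eq_right.2 hsub]
  simp [partialSum]

lemma F0_flipOn_of_dvd {j : ℕ} (hF : ∀ i ∈ F, x i = false) (hj : j ∣ #F) :
    F0 j x (flipOn F x) := by
  rw [F0_iff_modShift_zero, ← (ZMod.natCast_eq_zero_iff _ _).2 hj]
  exact modShift_flipOn j hF

lemma not_F0_flipOn_singleton {j : ℕ} (hj : j ≠ 1) (x : ℕ → Bool) (n : ℕ) :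
    ¬ F0 j x (flipOn {n} x) := by
  rw [F0_iff_modShift_zero]
  intro h0
  have hone : ModShift j x (flipOn {n} x) 1 ∨ ModShift j (flipOn {n} x) x 1 := by
    cases hx : x n
    · left; simpa using modShift_flipOn j (F := {n}) (by simpa using hx)
    · right
      have hflip : flipOn {n} (flipOn {n} x) = x := (flipOn {n}).symm_apply_apply x
      simpa [hflip] using
        modShift_flipOn j (F := {n}) (x := flipOn {n} x) (by simp [flipOn_apply, hx])
  rcases hone with h1 | h1
  · exact hj (ZMod.one_eq_zero_iff.1 (h1.unique h0))
  · exact hj (ZMod.one_eq_zero_iff.1 (h1.unique (by simpa using h0.symm)))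

end Flip

section Generic

lemma eventually_residual_frequently_eq {X : Type*} [TopologicalSpace X] [DiscreteTopology X]
    (b : X) : ∀ᶠ x in residual (ℕ → X), ∃ᶠ n in atTop, x n = b := by
  simp only [frequently_atTop]
  refine eventually_countable_forall.2 fun N => residual_of_dense_open ?_ fun x => ?_
  · simp only [ofPred_exists, ofPred_and]
    exact isOpen_iUnion fun n =>
      isOpen_const.inter <| show IsOpen ((fun y : ℕ → X => y n) ⁻¹' {b}) from
        (isOpen_discrete {b}).preimage (continuous_apply n)
  · have hlim : Tendsto (fun n => Function.update x n b) atTop (𝓝 x) :=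
      tendsto_pi_nhds.2 fun i => tendsto_const_nhds.congr' <|
        (eventually_gt_atTop i).mono fun n hn => (Function.update_of_ne hn.ne _ _).symm
    exact mem_closure_of_tendsto hlim <| (eventually_ge_atTop N).mono fun n hn =>
      ⟨n, hn, Function.update_self ..⟩

lemma exists_cylinder_subset {E : ℕ → Type*} [∀ n, TopologicalSpace (E n)]
    [∀ n, DiscreteTopology (E n)] {U : Set (∀ n, E n)} (hU : IsOpen U) {x : ∀ n, E n}
    (hx : x ∈ U) : ∃ M, PiNat.cylinder x M ⊆ U := by
  obtain ⟨_, ⟨y, M, rfl⟩, hxy, hsub⟩ :=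
    (PiNat.isTopologicalBasis_cylinders E).exists_subset_of_mem_open hx hU
  exact ⟨M, PiNat.mem_cylinder_iff_eq.1 hxy ▸ hsub⟩

lemma exists_forall_flipOn_mem {ι : Type*} [Countable ι] {A : ι → Set (ℕ → Bool)}
    (hA : ∀ i, BaireMeasurableSet (A i)) :
    ∃ x : ℕ → Bool, (∃ᶠ n in atTop, x n = false) ∧
      ∀ i, x ∈ A i → ∃ M, ∀ G : Finset ℕ, (∀ n ∈ G, M ≤ n) → flipOn G x ∈ A i := by
  choose U hUo hAU using fun i => (hA i).residualEq_isOpen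
  have hgen : ∀ᶠ y in residual (ℕ → Bool), ∀ i, y ∈ A i ↔ y ∈ U i :=
    eventually_countable_forall.2 fun i => eventuallyEq_set.1 (hAU i)
  -- Genericity for `A` survives the homeomorphisms `flipOn G`, of which there are countably many.
  have hgen' : ∀ᶠ y in residual (ℕ → Bool),
      ∀ (G : Finset ℕ) i, flipOn G y ∈ A i ↔ flipOn G y ∈ U i :=
    eventually_countable_forall.2 fun G =>
      Tendsto.eventually (f := flipOn G) (flipOn G).residual_map_eq.le hgen
  obtain ⟨x, hxA, hzeros⟩ :=
    (dense_of_mem_residual (hgen'.and (eventually_residual_frequently_eq false))).nonempty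
  refine ⟨x, hzeros, fun i hx => ?_⟩
  obtain ⟨M, hM⟩ := exists_cylinder_subset (hUo i) ((hxA ∅ i).1 (by simpa using hx))
  refine ⟨M, fun G hG => (hxA G i).2 (hM ?_)⟩
  exact PiNat.mem_cylinder_iff.2 fun n hn => flipOn_apply_of_lt hG hn

end Generic

lemma extraction_of_frequently_atTop_sparse {p : ℕ → Prop} (hp : ∃ᶠ n in atTop, p n)
    (M : ℕ → ℕ) : ∃ g : ℕ → ℕ, StrictMono g ∧ (∀ t, p (g t)) ∧ ∀ s t, s < t → M (g s) ≤ g t := by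
  choose f hf using frequently_atTop.1 hp
  set next : ℕ → ℕ := fun n => f (max (n + 1) (M n))
  have hnext : ∀ n, n < next n ∧ M n ≤ next n := fun n =>
    ⟨(le_max_left _ _).trans (hf _).1, (le_max_right _ _).trans (hf _).1⟩
  have hg : StrictMono fun t => next^[t] (f 0) := strictMono_nat_of_lt_succ fun t => by
    rw [Function.iterate_succ_apply']; exact (hnext _).1
  refine ⟨_, hg, fun t => ?_, fun s t hst => ?_⟩
  · cases t with
    | zero => exact (hf 0).2
    | succ t => rw [Function.iterate_succ_apply']; exact (hf _).2
  · calc M (next^[s] (f 0)) ≤ next^[s + 1] (f 0) := by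
          rw [Function.iterate_succ_apply']; exact (hnext _).2
      _ ≤ next^[t] (f 0) := hg.monotone hst

lemma modShift_map_flipOn_sum {k : ℕ} {φ : (ℕ → Bool) → ℕ → Bool} {x : ℕ → Bool} {P : Set ℕ}
    {b : ℕ → ZMod k}
    (hstep : ∀ n ∈ P, ∀ G : Finset ℕ, ↑G ⊆ P → (∀ i ∈ G, n < i) →
      ModShift k (φ (flipOn G x)) (φ (flipOn {n} (flipOn G x))) (b n))
    (G : Finset ℕ) (hG : ↑G ⊆ P) : ModShift k (φ x) (φ (flipOn G x)) (∑ n ∈ G, b n) := by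
  induction G using Finset.induction_on_min with
  | empty => simpa using ModShift.refl k (φ x)
  | insert n G hlt ih =>
    have hn : n ∉ G := fun h => lt_irrefl n (hlt n h)
    rw [coe_insert, Set.insert_subset_iff] at hG
    rw [flipOn_insert hn, sum_insert hn, add_comm]
    exact (ih hG.2).trans (hstep n hG.1 G hG.2 hlt)

lemma Finset.eq_zero_of_forall_sum_erase_eq_zero {ι R : Type*} [Semiring R] [DecidableEq ι]
    {s : Finset ι} {b : ι → R} (hs : IsUnit ((#s - 1 : ℕ) : R))
    (h : ∀ i ∈ s, ∑ t ∈ s.erase i, b t = 0) {i : ι} (hi : i ∈ s) : b i = 0 := by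
  have hconst : ∀ t ∈ s, b t = ∑ u ∈ s, b u := fun t ht => by
    rw [← add_sum_erase s b ht, h t ht, add_zero]
  have htotal : ((#s - 1 : ℕ) : R) * ∑ u ∈ s, b u = 0 := by
    rw [← h i hi, sum_congr rfl fun t ht => hconst t (mem_of_mem_erase ht), sum_const,
      card_erase_of_mem hi, nsmul_eq_mul]
  rw [hconst i hi, ← hs.mul_right_eq_zero, htotal]

lemma exists_modShift_flipOn_additive {k : ℕ} {φ : (ℕ → Bool) → ℕ → Bool}
    (hφ : BaireMeasurableFun φ) (hE : ∀ x n, E0 (φ x) (φ (flipOn {n} x))) :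
    ∃ (x : ℕ → Bool) (a : ℕ → ZMod k) (g : ℕ → ℕ), StrictMono g ∧ (∀ t, x (g t) = false) ∧
      (∀ n, ModShift k (φ x) (φ (flipOn {n} x)) (a n)) ∧
      ∀ G : Finset ℕ, ↑G ⊆ Set.range g → ModShift k (φ x) (φ (flipOn G x)) (∑ n ∈ G, a n) := by
  obtain ⟨x, hzeros, hstable⟩ := exists_forall_flipOn_mem
    (A := fun p : ℕ × ZMod k => {y | ModShift k (φ y) (φ (flipOn {p.1} y)) p.2})
    fun p => hφ.baireMeasurableSet_modShift (hφ.comp_homeomorph (flipOn {p.1})) p.2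
  choose a ha using fun n => (hE x n).exists_modShift (k := k)
  choose M hM using fun n => hstable (n, a n) (ha n)
  obtain ⟨g, hg, hgx, hgM⟩ := extraction_of_frequently_atTop_sparse hzeros M
  refine ⟨x, a, g, hg, hgx, ha, modShift_map_flipOn_sum ?_⟩
  rintro _ ⟨t, rfl⟩ G hG hlt
  refine hM (g t) G fun i hi => ?_
  obtain ⟨s, rfl⟩ := hG hi
  exact hgM t s (hg.lt_iff_lt.1 (hlt _ hi))

theorem no_baire_measurable_homomorphism_of_coprime_general
    (j k : ℕ) (hj : 2 ≤ j) (hcop : Nat.Coprime j k) :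
    ¬ ∃ φ : (ℕ → Bool) → (ℕ → Bool), BaireMeasurableFun φ ∧
      (∀ c d, E0 c d → ¬ F0 j c d → E0 (φ c) (φ d) ∧ ¬ F0 k (φ c) (φ d)) ∧
      (∀ c d, F0 j c d → F0 k (φ c) (φ d)) := by
  rintro ⟨φ, hφ, hE, hF⟩
  have hflip : ∀ x n, E0 (φ x) (φ (flipOn {n} x)) ∧ ¬ F0 k (φ x) (φ (flipOn {n} x)) :=
    fun x n => hE x _ (E0_flipOn {n} x) (not_F0_flipOn_singleton (by omega) x n)
  obtain ⟨x, a, g, hg, hgx, ha, hadd⟩ :=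
    exists_modShift_flipOn_additive (k := k) hφ fun x n => (hflip x n).1
  set Z := (range (j + 1)).image g
  have hZg : ↑Z ⊆ Set.range g := by simp [Z]
  have hZ : #Z = j + 1 := by rw [card_image_of_injective _ hg.injective, card_range]
  have hsum : ∀ n ∈ Z, ∑ i ∈ Z.erase n, a i = 0 := by
    intro n hn
    have hzero : ∀ i ∈ Z.erase n, x i = false := fun i hi => by
      obtain ⟨t, rfl⟩ := hZg (mem_of_mem_erase hi)
      exact hgx t
    have hF0 := hF _ _ (F0_flipOn_of_dvd hzero (by rw [card_erase_of_mem hn, hZ]; simp))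
    exact (hadd _ ((coe_subset.2 (erase_subset n Z)).trans hZg)).unique
      (F0_iff_modShift_zero.1 hF0)
  have ha0 : a (g 0) = 0 := eq_zero_of_forall_sum_erase_eq_zero
    (by rw [hZ, add_tsub_cancel_right]; exact (ZMod.isUnit_iff_coprime j k).2 hcop) hsum
    (mem_image_of_mem g (by simp))
  exact (hflip x (g 0)).2 (F0_iff_modShift_zero.2 (ha0 ▸ ha (g 0)))

theorem no_baire_measurable_homomorphism_of_coprime
    (j k : ℕ) (hj : 2 ≤ j) (hk : 2 ≤ k) (hcop : Nat.Coprime j k) :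
    ¬ ∃ φ : (ℕ → Bool) → (ℕ → Bool), BaireMeasurableFun φ ∧
      (∀ c d, E0 c d → ¬ F0 j c d → E0 (φ c) (φ d) ∧ ¬ F0 k (φ c) (φ d)) ∧
      (∀ c d, F0 j c d → F0 k (φ c) (φ d)) :=
  no_baire_measurable_homomorphism_of_coprime_general j k hj hcop
end
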